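/- arXiv:2410.22796 — 2 statements merged into one kernel-verified Lean document; each statement's English description precedes it below -/
import Mathlib

section
/- Let (Z, μ) be a measure space with μ finite and nonzero, and let ℓ : Z → ℝ be measurable with 0 ≤ ℓ ≤ B μ-almost everywhere for some real B ≥ 0. Then for every δ > 0 there exists a real α strictly less than the essential supremum of ℓ with respect to μ such that ∫ [ℓ(z) − α]₊ dμ(z) > 0, the function ψ_α(z) := [ℓ(z) − α]₊ / ∫ [ℓ − α]₊ dμ is a square-integrable probability density on (Z, μ), and the supremum, over all square-integrable probability densities ψ on (Z, μ), of ∫ ℓ(z) ψ(z) dμ(z) is at most ∫ ℓ(z) ψ_α(z) dμ(z) + δ. (This is Proposition 3.2 of the paper: the worst-case loss over square-integrable probability distributions is approximated to within δ by the expectation under the truncated density ψ_α ∝ [ℓ − α]₊.) -/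
open MeasureTheory

/-- Proposition 3.2: the worst-case loss over square-integrable probability
densities is δ-approximated by the expectation under the truncated density
ψ_α ∝ [ℓ − α]₊ for some α below the essential supremum of ℓ. -/
theorem stmt_8 {Z : Type*} [MeasurableSpace Z] (μ : Measure Z) [IsFiniteMeasure μ]
    (hμ : μ ≠ 0) (ℓ : Z → ℝ) (hm : Measurable ℓ) (B : ℝ) (hB : 0 ≤ B)
    (hb : ∀ᵐ z ∂μ, 0 ≤ ℓ z ∧ ℓ z ≤ B) (δ : ℝ) (hδ : 0 < δ) :
    ∃ α : ℝ, α < sInf {c : ℝ | ∀ᵐ z ∂μ, ℓ z ≤ c} ∧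
      0 < (∫ z, max (ℓ z - α) 0 ∂μ) ∧
      (let ψα : Z → ℝ := fun z => max (ℓ z - α) 0 / ∫ w, max (ℓ w - α) 0 ∂μ
       Measurable ψα ∧ (∀ᵐ z ∂μ, 0 ≤ ψα z) ∧ (∫ z, ψα z ∂μ) = 1 ∧
         Integrable (fun z => (ψα z) ^ 2) μ ∧
         sSup {x : ℝ | ∃ ψ : Z → ℝ, Measurable ψ ∧ (∀ᵐ z ∂μ, 0 ≤ ψ z) ∧
             (∫ z, ψ z ∂μ) = 1 ∧ Integrable (fun z => (ψ z) ^ 2) μ ∧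
             x = ∫ z, ℓ z * ψ z ∂μ} ≤ (∫ z, ℓ z * ψα z ∂μ) + δ) := by
  classical
  have hne : (Filter.NeBot (ae μ)) := ae_neBot.mpr hμ
  set S : Set ℝ := {c : ℝ | ∀ᵐ z ∂μ, ℓ z ≤ c} with hSdef
  have hBS : B ∈ S := hb.mono fun z hz => hz.2
  have hSne : S.Nonempty := ⟨B, hBS⟩
  have hS0 : ∀ c ∈ S, (0:ℝ) ≤ c := by
    intro c hc
    obtain ⟨z, ⟨hz0, _⟩, hzc⟩ := (hb.and hc).exists
    linarith
  have hbdd : BddBelow S := ⟨0, fun c hc => hS0 c hc⟩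
  set M := sInf S with hMdef
  have hM0 : (0:ℝ) ≤ M := le_csInf hSne hS0
  have hMB : M ≤ B := csInf_le hbdd hBS
  -- ℓ ≤ M a.e.
  have hle : ∀ᵐ z ∂μ, ℓ z ≤ M := by
    have h1 : ∀ n : ℕ, ∀ᵐ z ∂μ, ℓ z ≤ M + 1/(n+1) := by
      intro n
      have hlt : M < M + 1/(n+1) := by
        have : (0:ℝ) < 1/(n+1) := by positivity
        linarith
      obtain ⟨c, hcS, hclt⟩ := exists_lt_of_csInf_lt hSne hlt
      exact Filter.Eventually.mono (hcS : ∀ᵐ z ∂μ, ℓ z ≤ c) fun z hz => hz.trans hclt.le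
    have h2 := (ae_all_iff).mpr h1
    refine h2.mono fun z hz => ?_
    by_contra h
    push_neg at h
    obtain ⟨n, hn⟩ := exists_nat_one_div_lt (sub_pos.mpr h)
    have := hz n
    have hcast : (1:ℝ)/(n+1) = 1/(↑n+1) := by push_cast; ring
    rw [hcast] at hn
    linarith
  set α : ℝ := M - δ with hαdef
  have hαM : α < M := by simp [hαdef]; linarith
  have hαB : α < B := lt_of_lt_of_le hαM hMB
  set f : Z → ℝ := fun z => max (ℓ z - α) 0 with hfdef
  have hf_meas : Measurable f := (hm.sub measurable_const).max measurable_const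
  have hf_nonneg : ∀ z, 0 ≤ f z := fun z => le_max_right _ _
  have hf_bound : ∀ᵐ z ∂μ, ‖f z‖ ≤ B - α := by
    filter_upwards [hb] with z hz
    rw [Real.norm_eq_abs, abs_of_nonneg (hf_nonneg z)]
    exact max_le (by linarith [hz.2]) (by linarith)
  have hf_int : Integrable f μ :=
    (integrable_const (B - α)).mono' hf_meas.aestronglyMeasurable hf_bound
  -- positivity of ∫ f
  have hnotae : ¬ (∀ᵐ z ∂μ, ℓ z ≤ α) := by
    intro h
    have : M ≤ α := csInf_le hbdd h
    linarith
  have hI : 0 < ∫ z, f z ∂μ := by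
    rw [integral_pos_iff_support_of_nonneg_ae
      (Filter.Eventually.of_forall hf_nonneg) hf_int]
    have hsub : {z | ¬ ℓ z ≤ α} ⊆ Function.support f := by
      intro z hz
      simp only [Set.mem_setOf_eq, not_le] at hz
      simp only [Function.mem_support, hfdef]
      have : 0 < ℓ z - α := by linarith
      positivity
    have hpos : 0 < μ {z | ¬ ℓ z ≤ α} := by
      rw [pos_iff_ne_zero]
      intro h0
      exact hnotae h0
    exact lt_of_lt_of_le hpos (measure_mono hsub)
  set I : ℝ := ∫ z, f z ∂μ with hIdef
  refine ⟨α, hαM, hI, ?_⟩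
  intro ψα
  have hψα_meas : Measurable ψα := hf_meas.div_const I
  have hψα_nonneg : ∀ z, 0 ≤ ψα z := fun z => div_nonneg (hf_nonneg z) hI.le
  have hψα_int1 : (∫ z, ψα z ∂μ) = 1 := by
    simp only [ψα]
    rw [integral_div]
    exact div_self (ne_of_gt hI)
  have hψα_bound : ∀ᵐ z ∂μ, ‖ψα z‖ ≤ (B - α) / I := by
    filter_upwards [hf_bound] with z hz
    rw [Real.norm_eq_abs, abs_of_nonneg (hψα_nonneg z)]
    have : f z ≤ B - α := by rwa [Real.norm_eq_abs, abs_of_nonneg (hf_nonneg z)] at hz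
    show f z / I ≤ (B - α) / I
    gcongr
  have hψα_int : Integrable ψα μ :=
    (integrable_const _).mono' hψα_meas.aestronglyMeasurable hψα_bound
  have hsq_int : Integrable (fun z => (ψα z) ^ 2) μ := by
    refine (integrable_const (((B - α) / I) ^ 2)).mono'
      ((hψα_meas.pow_const 2).aestronglyMeasurable) ?_
    filter_upwards [hψα_bound] with z hz
    rw [norm_pow]
    exact pow_le_pow_left₀ (norm_nonneg _) hz 2
  have hℓf_int : Integrable (fun z => ℓ z * f z) μ := by
    refine (integrable_const (B * (B - α))).mono'
      (hm.mul hf_meas).aestronglyMeasurable ?_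
    filter_upwards [hb, hf_bound] with z hz hfz
    rw [Real.norm_eq_abs, abs_mul]
    have h1 : |ℓ z| ≤ B := abs_le.mpr ⟨by linarith [hz.1], hz.2⟩
    have h2 : |f z| ≤ B - α := by rwa [Real.norm_eq_abs] at hfz
    exact mul_le_mul h1 h2 (abs_nonneg _) hB
  have hαf : ∀ z, α * f z ≤ ℓ z * f z := by
    intro z
    rcases le_or_gt (ℓ z) α with h | h
    · have hz0 : f z = 0 := max_eq_right (by linarith)
      simp [hz0]
    · have hz0 : 0 ≤ f z := hf_nonneg z
      nlinarith
  have hαint : α ≤ ∫ z, ℓ z * ψα z ∂μ := by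
    have h1 : ∫ z, ℓ z * ψα z ∂μ = (∫ z, ℓ z * f z ∂μ) / I := by
      rw [← integral_div]
      apply integral_congr_ae
      filter_upwards with z
      show ℓ z * (f z / I) = ℓ z * f z / I
      ring
    rw [h1, le_div_iff₀ hI]
    calc α * I = ∫ z, α * f z ∂μ := (integral_const_mul α f).symm
      _ ≤ ∫ z, ℓ z * f z ∂μ :=
        integral_mono (hf_int.const_mul α) hℓf_int hαf
  have hsSup : sSup {x : ℝ | ∃ ψ : Z → ℝ, Measurable ψ ∧ (∀ᵐ z ∂μ, 0 ≤ ψ z) ∧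
      (∫ z, ψ z ∂μ) = 1 ∧ Integrable (fun z => (ψ z) ^ 2) μ ∧
      x = ∫ z, ℓ z * ψ z ∂μ} ≤ M := by
    apply Real.sSup_le ?_ hM0
    rintro x ⟨ψ, hψm, hψ0, hψ1, hψ2, rfl⟩
    have hψ_int : Integrable ψ μ := by
      by_contra h
      rw [integral_undef h] at hψ1
      norm_num at hψ1
    have hℓψ_int : Integrable (fun z => ℓ z * ψ z) μ := by
      refine (hψ_int.const_mul B).mono' (hm.mul hψm).aestronglyMeasurable ?_
      filter_upwards [hb, hψ0] with z hz hz0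
      rw [Real.norm_eq_abs, abs_mul, abs_of_nonneg hz0]
      exact mul_le_mul_of_nonneg_right
        ((abs_le.mpr ⟨by linarith [hz.1], hz.2⟩).trans le_rfl) hz0
    calc ∫ z, ℓ z * ψ z ∂μ ≤ ∫ z, M * ψ z ∂μ := by
          apply integral_mono_ae hℓψ_int (hψ_int.const_mul M)
          filter_upwards [hle, hψ0] with z h1 h2
          exact mul_le_mul_of_nonneg_right h1 h2
      _ = M := by rw [integral_const_mul, hψ1, mul_one]
  refine ⟨hψα_meas, Filter.Eventually.of_forall hψα_nonneg, hψα_int1, hsq_int, ?_⟩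
  have : M = α + δ := by simp [hαdef]
  linarith
end

section
/- Let (Z, μ) be a measure space with μ finite and nonzero, and let ℓ : Z → ℝ be measurable with 0 ≤ ℓ ≤ B μ-almost everywhere for some real B ≥ 0. Let S denote the essential supremum of ℓ with respect to μ, and for α < S define g(α) := (∫ ℓ(z)·[ℓ(z) − α]₊ dμ(z)) / (∫ [ℓ(z) − α]₊ dμ(z)). Then for every α < S the denominator is strictly positive and α ≤ g(α) ≤ S, and consequently g(α) tends to S as α tends to S from the left. (This is the approximation content of Proposition 3.2: the expected loss under the truncated density ψ_α ∝ [ℓ − α]₊ converges to the worst-case value ess sup ℓ as the truncation level approaches it.) -/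
open MeasureTheory

/-- Approximation content of Proposition 3.2: with S = ess sup ℓ and
g(α) = (∫ ℓ·[ℓ − α]₊ dμ)/(∫ [ℓ − α]₊ dμ), for each α < S the denominator is
positive and α ≤ g(α) ≤ S; consequently g(α) → S as α → S⁻. -/
theorem stmt_11 {Z : Type*} [MeasurableSpace Z] (μ : Measure Z) [IsFiniteMeasure μ]
    (hμ : μ ≠ 0) (ℓ : Z → ℝ) (hm : Measurable ℓ) (B : ℝ) (hB : 0 ≤ B)
    (hb : ∀ᵐ z ∂μ, 0 ≤ ℓ z ∧ ℓ z ≤ B) :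
    let S := sInf {c : ℝ | ∀ᵐ z ∂μ, ℓ z ≤ c}
    let g : ℝ → ℝ := fun α =>
      (∫ z, ℓ z * max (ℓ z - α) 0 ∂μ) / ∫ z, max (ℓ z - α) 0 ∂μ
    (∀ α < S, 0 < (∫ z, max (ℓ z - α) 0 ∂μ) ∧ α ≤ g α ∧ g α ≤ S) ∧
      Filter.Tendsto g (nhdsWithin S (Set.Iio S)) (nhds S) := by
  intro S g
  have hBT : B ∈ {c : ℝ | ∀ᵐ z ∂μ, ℓ z ≤ c} := hb.mono fun z h => h.2
  have hne : Set.Nonempty {c : ℝ | ∀ᵐ z ∂μ, ℓ z ≤ c} := ⟨B, hBT⟩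
  have haene : (ae μ).NeBot := ae_neBot.mpr hμ
  have hbdd : BddBelow {c : ℝ | ∀ᵐ z ∂μ, ℓ z ≤ c} := by
    refine ⟨0, fun c hc => ?_⟩
    obtain ⟨z, hz1, hz2⟩ := (hb.and hc).exists
    linarith [hz1.1, hz1.2]
  have hST : ∀ᵐ z ∂μ, ℓ z ≤ S := by
    have h : ∀ q : ℚ, 0 < q → ∀ᵐ z ∂μ, ℓ z ≤ S + q := by
      intro q hq
      obtain ⟨c, hcT, hc⟩ := exists_lt_of_csInf_lt hne
        (show sInf {c : ℝ | ∀ᵐ z ∂μ, ℓ z ≤ c} < S + (q : ℝ) by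
          have : (0 : ℝ) < q := by exact_mod_cast hq
          linarith)
      exact (show ∀ᵐ z ∂μ, ℓ z ≤ c from hcT).mono fun z hz => hz.trans hc.le
    have h' : ∀ᵐ z ∂μ, ∀ q : ℚ, 0 < q → ℓ z ≤ S + q := by
      rw [ae_all_iff]; intro q
      by_cases hq : 0 < q
      · exact (h q hq).mono fun z hz _ => hz
      · exact Filter.Eventually.of_forall fun z h' => absurd h' hq
    refine h'.mono fun z hz => ?_
    by_contra hlt
    push_neg at hlt
    obtain ⟨q, hq1, hq2⟩ := exists_rat_btwn (sub_pos.mpr hlt)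
    have := hz q (by exact_mod_cast hq1)
    linarith
  have hmint : ∀ α : ℝ, Integrable (fun z => max (ℓ z - α) 0) μ := by
    intro α
    refine (integrable_const (B + |α|)).mono'
      ((hm.sub measurable_const).max measurable_const).aestronglyMeasurable ?_
    refine hb.mono fun z hz => ?_
    rw [Real.norm_eq_abs, abs_of_nonneg (le_max_right _ _)]
    have h1 : ℓ z - α ≤ B + |α| := by cases abs_cases α <;> linarith [hz.2]
    exact max_le h1 (by linarith [abs_nonneg α])
  have hlmint : ∀ α : ℝ, Integrable (fun z => ℓ z * max (ℓ z - α) 0) μ := by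
    intro α
    refine (integrable_const (B * (B + |α|))).mono'
      (hm.mul ((hm.sub measurable_const).max measurable_const)).aestronglyMeasurable ?_
    refine hb.mono fun z hz => ?_
    rw [Real.norm_eq_abs, abs_mul, abs_of_nonneg hz.1, abs_of_nonneg (le_max_right _ _)]
    have h1 : max (ℓ z - α) 0 ≤ B + |α| :=
      max_le (by cases abs_cases α <;> linarith [hz.2]) (by linarith [abs_nonneg α])
    exact mul_le_mul hz.2 h1 (le_max_right _ _) hB
  have key : ∀ α < S, 0 < (∫ z, max (ℓ z - α) 0 ∂μ) ∧ α ≤ g α ∧ g α ≤ S := by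
    intro α hα
    have hD : 0 < ∫ z, max (ℓ z - α) 0 ∂μ := by
      refine (integral_pos_iff_support_of_nonneg_ae
        (Filter.Eventually.of_forall fun z => le_max_right _ _) (hmint α)).mpr ?_
      rw [pos_iff_ne_zero]
      intro h0
      have hle : ∀ᵐ z ∂μ, ℓ z ≤ α := by
        have h1 : ∀ᵐ z ∂μ, z ∉ Function.support fun z => max (ℓ z - α) 0 :=
          measure_eq_zero_iff_ae_notMem.mp h0
        refine h1.mono fun z hz => ?_
        simp only [Function.mem_support, ne_eq, not_not] at hz
        have := le_max_left (ℓ z - α) 0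
        rw [hz] at this
        linarith
      exact absurd (csInf_le hbdd hle) (not_le.mpr hα)
    have hnum_ge : α * ∫ z, max (ℓ z - α) 0 ∂μ ≤ ∫ z, ℓ z * max (ℓ z - α) 0 ∂μ := by
      rw [← integral_const_mul]
      refine integral_mono_ae ((hmint α).const_mul α) (hlmint α)
        (Filter.Eventually.of_forall fun z => ?_)
      rcases le_or_gt (ℓ z - α) 0 with h | h
      · simp [max_eq_right h]
      · have hm' : max (ℓ z - α) 0 = ℓ z - α := max_eq_left h.le
        simp only [hm']
        nlinarith
    have hnum_le : ∫ z, ℓ z * max (ℓ z - α) 0 ∂μ ≤ S * ∫ z, max (ℓ z - α) 0 ∂μ := by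
      rw [← integral_const_mul]
      exact integral_mono_ae (hlmint α) ((hmint α).const_mul S)
        (hST.mono fun z hz => mul_le_mul_of_nonneg_right hz (le_max_right _ _))
    exact ⟨hD, (le_div_iff₀ hD).mpr hnum_ge, (div_le_iff₀ hD).mpr hnum_le⟩
  refine ⟨key, ?_⟩
  refine tendsto_of_tendsto_of_tendsto_of_le_of_le'
    (Filter.Tendsto.mono_right Filter.tendsto_id nhdsWithin_le_nhds) tendsto_const_nhds ?_ ?_
  · filter_upwards [eventually_mem_nhdsWithin] with α hα
    exact (key α hα).2.1
  · filter_upwards [eventually_mem_nhdsWithin] with α hα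
    exact (key α hα).2.2
end
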